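/- Strong duality for occupancy LPs: for a finite MDP, the maximum of (1/(1-γ)) Σ_{s,a} d(s,a) R(s,a) over nonnegative d satisfying the Bellman flow constraint Σ_a d(s,a) = (1-γ)μ₀(s) + γ Σ_{s̃,ã} T(s|s̃,ã) d(s̃,ã) for all s equals the maximum over policies π of the discounted return J(π). -/

import Mathlib

/-!
A policy `π` induces the state kernel `P_π s s' = ∑ a, π s a * T s a s'`, and its discounted
state occupancy `q_π = (1 - γ) ∑ₜ γ^t μₜ` solves `q = (1 - γ) μ₀ + γ q P_π`. Hence
`d^π = q_π ⊗ π` satisfies the Bellman flow constraint, and its objective is `J(π)`.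
Conversely, a nonnegative flow `d` factors as `m ⊗ π_d` with `m` its state marginal and
`π_d = d / m`; then `m` solves the same equation for `P_{π_d}`, whose solution is unique since
`q ↦ γ q P` is a contraction for the `ℓ¹` norm. So `d = d^{π_d}`, and both sets of values agree.
-/

open scoped BigOperators

/-- Distribution over states at time `t` for the Markov chain induced by policy `π`
and transition kernel `T`, started from `μ₀`. -/
noncomputable def stateDist {S A : Type*} [Fintype S] [Fintype A]
    (μ₀ : S → ℝ) (T : S → A → S → ℝ) (π : S → A → ℝ) : ℕ → S → ℝ
  | 0 => μ₀
  | t + 1 => fun s' => ∑ s : S, ∑ a : A, stateDist μ₀ T π t s * π s a * T s a s'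

/-- Discounted state-action occupancy `d^π(s,a) = (1-γ) ∑_t γ^t Pr(s_t = s, a_t = a)`. -/
noncomputable def occ {S A : Type*} [Fintype S] [Fintype A]
    (γ : ℝ) (μ₀ : S → ℝ) (T : S → A → S → ℝ) (π : S → A → ℝ) (s : S) (a : A) : ℝ :=
  (1 - γ) * ∑' t : ℕ, γ ^ t * (stateDist μ₀ T π t s * π s a)

open Finset

section

variable {S : Type*} [Fintype S]

lemma sum_abs_sum_mul_le_of_mem_stdSimplex {P : S → S → ℝ} (hP : ∀ s, P s ∈ stdSimplex ℝ S)
    (z : S → ℝ) : ∑ s', |∑ s, z s * P s s'| ≤ ∑ s, |z s| :=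
  calc ∑ s', |∑ s, z s * P s s'|
      ≤ ∑ s', ∑ s, |z s| * P s s' := by
        gcongr with s'
        refine (abs_sum_le_sum_abs _ _).trans_eq (sum_congr rfl fun s _ => ?_)
        rw [abs_mul, abs_of_nonneg ((hP s).1 s')]
    _ = ∑ s, |z s| := by
        rw [sum_comm]
        simp only [← mul_sum, (hP _).2, mul_one]

lemma eq_of_bellman_eq {P : S → S → ℝ} (hP : ∀ s, P s ∈ stdSimplex ℝ S) {γ : ℝ}
    (hγ0 : 0 ≤ γ) (hγ1 : γ < 1) {c x y : S → ℝ}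
    (hx : ∀ s', x s' = c s' + γ * ∑ s, x s * P s s')
    (hy : ∀ s', y s' = c s' + γ * ∑ s, y s * P s s') : x = y := by
  set z := x - y
  have hz : ∀ s', z s' = γ * ∑ s, z s * P s s' := fun s' => by
    simp only [z, Pi.sub_apply, sub_mul, sum_sub_distrib, hx s', hy s']
    ring
  have hcontr : ∑ s, |z s| ≤ γ * ∑ s, |z s| :=
    calc ∑ s', |z s'| = γ * ∑ s', |∑ s, z s * P s s'| := by
          rw [mul_sum]
          exact sum_congr rfl fun s' _ => by rw [hz s', abs_mul, abs_of_nonneg hγ0]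
      _ ≤ γ * ∑ s, |z s| :=
          mul_le_mul_of_nonneg_left (sum_abs_sum_mul_le_of_mem_stdSimplex hP z) hγ0
  have hzero : ∑ s, |z s| = 0 := by
    nlinarith [sum_nonneg fun s (_ : s ∈ univ) => abs_nonneg (z s)]
  funext s
  have := (sum_eq_zero_iff_of_nonneg fun s _ => abs_nonneg (z s)).1 hzero s (mem_univ s)
  exact sub_eq_zero.1 (abs_eq_zero.1 this)

end

section

variable {S A : Type*} [Fintype A]

-- Where `d` has no mass the conditional is arbitrary; the uniform policy is used there.
noncomputable def policyOf (d : S → A → ℝ) (s : S) (a : A) : ℝ :=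
  if ∑ b, d s b = 0 then (Fintype.card A : ℝ)⁻¹ else d s a / ∑ b, d s b

lemma policyOf_mem_stdSimplex [Nonempty A] {d : S → A → ℝ} (hd : ∀ s a, 0 ≤ d s a) (s : S) :
    policyOf d s ∈ stdSimplex ℝ A := by
  unfold policyOf
  split_ifs with h
  · refine ⟨fun a => by positivity, ?_⟩
    simp [Finset.card_univ]
  · exact ⟨fun a => div_nonneg (hd s a) (sum_nonneg fun b _ => hd s b),
      by rw [← sum_div, div_self h]⟩

lemma sum_mul_policyOf {d : S → A → ℝ} (hd : ∀ s a, 0 ≤ d s a) (s : S) (a : A) :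
    (∑ b, d s b) * policyOf d s a = d s a := by
  unfold policyOf
  split_ifs with h
  · rw [h, zero_mul, (sum_eq_zero_iff_of_nonneg fun b _ => hd s b).1 h a (mem_univ a)]
  · exact mul_div_cancel₀ _ h

end

section

variable {S A : Type*} [Fintype S] [Fintype A]
variable {γ : ℝ} {μ₀ : S → ℝ} {T : S → A → S → ℝ} {π : S → A → ℝ}

noncomputable def policyKernel (T : S → A → S → ℝ) (π : S → A → ℝ) (s : S) : S → ℝ :=
  ∑ a, π s a • T s a

lemma policyKernel_mem_stdSimplex (hT : ∀ s a, T s a ∈ stdSimplex ℝ S)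
    (hπ : ∀ s, π s ∈ stdSimplex ℝ A) (s : S) : policyKernel T π s ∈ stdSimplex ℝ S :=
  (convex_stdSimplex ℝ S).sum_mem (fun a _ => (hπ s).1 a) (hπ s).2 fun a _ => hT s a

lemma stateDist_succ (t : ℕ) :
    stateDist μ₀ T π (t + 1) = ∑ s, stateDist μ₀ T π t s • policyKernel T π s := by
  funext s'
  simp only [stateDist, policyKernel, Finset.sum_apply, Pi.smul_apply, smul_eq_mul, mul_sum,
    mul_assoc]

lemma stateDist_mem_stdSimplex (hμ : μ₀ ∈ stdSimplex ℝ S) (hT : ∀ s a, T s a ∈ stdSimplex ℝ S)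
    (hπ : ∀ s, π s ∈ stdSimplex ℝ A) (t : ℕ) : stateDist μ₀ T π t ∈ stdSimplex ℝ S := by
  induction t with
  | zero => exact hμ
  | succ t ih =>
    rw [stateDist_succ]
    exact (convex_stdSimplex ℝ S).sum_mem (fun s _ => ih.1 s) ih.2
      fun s _ => policyKernel_mem_stdSimplex hT hπ s

lemma summable_pow_mul_stateDist (hγ0 : 0 ≤ γ) (hγ1 : γ < 1) (hμ : μ₀ ∈ stdSimplex ℝ S)
    (hT : ∀ s a, T s a ∈ stdSimplex ℝ S) (hπ : ∀ s, π s ∈ stdSimplex ℝ A) (s : S) :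
    Summable fun t => γ ^ t * stateDist μ₀ T π t s := by
  have h := fun t => mem_Icc_of_mem_stdSimplex (stateDist_mem_stdSimplex hμ hT hπ t) s
  refine (summable_geometric_of_lt_one hγ0 hγ1).of_nonneg_of_le (fun t => ?_) fun t => ?_
  · exact mul_nonneg (pow_nonneg hγ0 t) (h t).1
  · exact mul_le_of_le_one_right (pow_nonneg hγ0 t) (h t).2

noncomputable def stateOcc (γ : ℝ) (μ₀ : S → ℝ) (T : S → A → S → ℝ) (π : S → A → ℝ) (s : S) : ℝ :=
  (1 - γ) * ∑' t : ℕ, γ ^ t * stateDist μ₀ T π t s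

lemma occ_eq_stateOcc_mul : occ γ μ₀ T π = fun s a => stateOcc γ μ₀ T π s * π s a := by
  funext s a
  rw [occ, stateOcc, mul_assoc, ← tsum_mul_right]
  simp only [mul_assoc]

lemma sum_stateOcc_mul (hγ0 : 0 ≤ γ) (hγ1 : γ < 1) (hμ : μ₀ ∈ stdSimplex ℝ S)
    (hT : ∀ s a, T s a ∈ stdSimplex ℝ S) (hπ : ∀ s, π s ∈ stdSimplex ℝ A) (g : S → ℝ) :
    ∑ s, stateOcc γ μ₀ T π s * g s
      = (1 - γ) * ∑' t : ℕ, γ ^ t * ∑ s, stateDist μ₀ T π t s * g s := by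
  simp only [stateOcc, mul_assoc, ← mul_sum, ← tsum_mul_right]
  rw [← Summable.tsum_finsetSum fun s _ => by
    simpa only [mul_assoc] using (summable_pow_mul_stateDist hγ0 hγ1 hμ hT hπ s).mul_right (g s)]
  simp only [mul_sum]

lemma stateOcc_bellman (hγ0 : 0 ≤ γ) (hγ1 : γ < 1) (hμ : μ₀ ∈ stdSimplex ℝ S)
    (hT : ∀ s a, T s a ∈ stdSimplex ℝ S) (hπ : ∀ s, π s ∈ stdSimplex ℝ A) (s' : S) :
    stateOcc γ μ₀ T π s' = (1 - γ) * μ₀ s'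
      + γ * ∑ s, stateOcc γ μ₀ T π s * policyKernel T π s s' := by
  have hstep : ∀ t, γ ^ (t + 1) * stateDist μ₀ T π (t + 1) s'
      = γ * (γ ^ t * ∑ s, stateDist μ₀ T π t s * policyKernel T π s s') := fun t => by
    rw [stateDist_succ]
    simp only [Finset.sum_apply, Pi.smul_apply, smul_eq_mul]
    ring
  rw [sum_stateOcc_mul hγ0 hγ1 hμ hT hπ, stateOcc,
    (summable_pow_mul_stateDist hγ0 hγ1 hμ hT hπ s').tsum_eq_zero_add]
  simp only [hstep, tsum_mul_left, pow_zero, one_mul]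
  rw [show stateDist μ₀ T π 0 s' = μ₀ s' from rfl]
  ring

def IsBellmanFlow (γ : ℝ) (μ₀ : S → ℝ) (T : S → A → S → ℝ) (d : S → A → ℝ) : Prop :=
  ∀ s : S, (∑ a : A, d s a) = (1 - γ) * μ₀ s + γ * ∑ st : S, ∑ at' : A, T st at' s * d st at'

lemma isBellmanFlow_mul_iff (hπ : ∀ s, ∑ a, π s a = 1) (x : S → ℝ) :
    IsBellmanFlow γ μ₀ T (fun s a => x s * π s a) ↔
      ∀ s', x s' = (1 - γ) * μ₀ s' + γ * ∑ s, x s * policyKernel T π s s' := by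
  have hflow : ∀ s', ∑ s, ∑ a, T s a s' * (x s * π s a) = ∑ s, x s * policyKernel T π s s' :=
    fun s' => sum_congr rfl fun s _ => by
      simp only [policyKernel, Finset.sum_apply, Pi.smul_apply, smul_eq_mul, mul_sum]
      exact sum_congr rfl fun a _ => by ring
  simp only [IsBellmanFlow, ← mul_sum, hπ, mul_one, hflow]

lemma IsBellmanFlow.nonempty {d : S → A → ℝ} (hγ1 : γ < 1) (hμ : ∑ s, μ₀ s = 1)
    (hd : IsBellmanFlow γ μ₀ T d) : Nonempty A := by
  by_contra hA
  rw [not_nonempty_iff] at hA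
  have hμ₀ : ∀ s, μ₀ s = 0 := fun s => by
    have := hd s
    simp only [univ_eq_empty, sum_empty, sum_const_zero, mul_zero, add_zero] at this
    exact (mul_eq_zero.1 this.symm).resolve_left (by linarith)
  simp [hμ₀] at hμ

lemma occ_nonneg (hγ0 : 0 ≤ γ) (hγ1 : γ < 1) (hμ : μ₀ ∈ stdSimplex ℝ S)
    (hT : ∀ s a, T s a ∈ stdSimplex ℝ S) (hπ : ∀ s, π s ∈ stdSimplex ℝ A) (s : S) (a : A) :
    0 ≤ occ γ μ₀ T π s a :=
  mul_nonneg (sub_nonneg.2 hγ1.le) <| tsum_nonneg fun t => mul_nonneg (pow_nonneg hγ0 t) <|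
    mul_nonneg ((stateDist_mem_stdSimplex hμ hT hπ t).1 s) ((hπ s).1 a)

lemma isBellmanFlow_occ (hγ0 : 0 ≤ γ) (hγ1 : γ < 1) (hμ : μ₀ ∈ stdSimplex ℝ S)
    (hT : ∀ s a, T s a ∈ stdSimplex ℝ S) (hπ : ∀ s, π s ∈ stdSimplex ℝ A) :
    IsBellmanFlow γ μ₀ T (occ γ μ₀ T π) := by
  rw [occ_eq_stateOcc_mul, isBellmanFlow_mul_iff fun s => (hπ s).2]
  exact stateOcc_bellman hγ0 hγ1 hμ hT hπ

lemma occ_objective_eq (hγ0 : 0 ≤ γ) (hγ1 : γ < 1) (hμ : μ₀ ∈ stdSimplex ℝ S)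
    (hT : ∀ s a, T s a ∈ stdSimplex ℝ S) (hπ : ∀ s, π s ∈ stdSimplex ℝ A) (R : S → A → ℝ) :
    1 / (1 - γ) * ∑ s, ∑ a, occ γ μ₀ T π s a * R s a
      = ∑' t : ℕ, γ ^ t * ∑ s, ∑ a, stateDist μ₀ T π t s * π s a * R s a := by
  simp only [occ_eq_stateOcc_mul, mul_assoc, ← mul_sum]
  rw [sum_stateOcc_mul hγ0 hγ1 hμ hT hπ, one_div, inv_mul_cancel_left₀ (by linarith)]

lemma eq_occ_policyOf (hγ0 : 0 ≤ γ) (hγ1 : γ < 1) (hμ : μ₀ ∈ stdSimplex ℝ S)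
    (hT : ∀ s a, T s a ∈ stdSimplex ℝ S) {d : S → A → ℝ} (hd0 : ∀ s a, 0 ≤ d s a)
    (hd : IsBellmanFlow γ μ₀ T d) : d = occ γ μ₀ T (policyOf d) := by
  have := hd.nonempty hγ1 hμ.2
  have hπ := policyOf_mem_stdSimplex hd0
  have hfactor : d = fun s a => (∑ b, d s b) * policyOf d s a :=
    funext₂ fun s a => (sum_mul_policyOf hd0 s a).symm
  have hmarginal : (fun s => ∑ b, d s b) = stateOcc γ μ₀ T (policyOf d) :=
    eq_of_bellman_eq (policyKernel_mem_stdSimplex hT hπ) hγ0 hγ1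
      ((isBellmanFlow_mul_iff (fun s => (hπ s).2) _).1 (hfactor ▸ hd))
      (stateOcc_bellman hγ0 hγ1 hμ hT hπ)
  rw [occ_eq_stateOcc_mul, ← hmarginal]
  exact hfactor

end

/-- Strong duality for occupancy LPs: the optimal value of the Bellman-flow LP equals
the optimal discounted return over policies. -/
theorem occupancy_lp_strong_duality {S A : Type*} [Fintype S] [Fintype A]
    (γ : ℝ) (μ₀ : S → ℝ) (T : S → A → S → ℝ) (R : S → A → ℝ)
    (hγ0 : 0 < γ) (hγ1 : γ < 1)
    (hμ0 : ∀ s, 0 ≤ μ₀ s) (hμsum : ∑ s : S, μ₀ s = 1)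
    (hT0 : ∀ s a s', 0 ≤ T s a s') (hTsum : ∀ s a, ∑ s' : S, T s a s' = 1) :
    sSup {r : ℝ | ∃ d : S → A → ℝ, (∀ s a, 0 ≤ d s a) ∧
        (∀ s : S, (∑ a : A, d s a) =
          (1 - γ) * μ₀ s + γ * ∑ st : S, ∑ at' : A, T st at' s * d st at') ∧
        r = (1 / (1 - γ)) * ∑ s : S, ∑ a : A, d s a * R s a} =
      sSup {r : ℝ | ∃ π : S → A → ℝ, (∀ s a, 0 ≤ π s a) ∧ (∀ s, ∑ a : A, π s a = 1) ∧
        r = ∑' t : ℕ, γ ^ t *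
          ∑ s : S, ∑ a : A, stateDist μ₀ T π t s * π s a * R s a} := by
  have hμ : μ₀ ∈ stdSimplex ℝ S := ⟨hμ0, hμsum⟩
  have hT : ∀ s a, T s a ∈ stdSimplex ℝ S := fun s a => ⟨hT0 s a, hTsum s a⟩
  congr 1
  ext r
  constructor
  · rintro ⟨d, hd0, hd : IsBellmanFlow γ μ₀ T d, rfl⟩
    have := hd.nonempty hγ1 hμsum
    have hπ := policyOf_mem_stdSimplex hd0
    refine ⟨policyOf d, fun s => (hπ s).1, fun s => (hπ s).2, ?_⟩
    rw [← occ_objective_eq hγ0.le hγ1 hμ hT hπ, ← eq_occ_policyOf hγ0.le hγ1 hμ hT hd0 hd]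
  · rintro ⟨π, hπ0, hπ1, rfl⟩
    have hπ : ∀ s, π s ∈ stdSimplex ℝ A := fun s => ⟨hπ0 s, hπ1 s⟩
    exact ⟨occ γ μ₀ T π, occ_nonneg hγ0.le hγ1 hμ hT hπ, isBellmanFlow_occ hγ0.le hγ1 hμ hT hπ,
      (occ_objective_eq hγ0.le hγ1 hμ hT hπ R).symm⟩
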